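/- arXiv:1107.5415 — 3 statements merged into one kernel-verified Lean document; each statement's English description precedes it below -/
import Mathlib

section
/- For a regular integer matrix M, the Fourier matrix F(M) = m^{-1/2}(exp(-2πi h^T M^{-1} g))_{h ∈ G(M^T), g ∈ G(M)} is unitary. -/
noncomputable section

/-- The subgroup `ℤ^d` of `ℝ^d` (vectors with integer entries). -/
abbrev intLat (d : ℕ) : AddSubgroup (Fin d → ℝ) :=
  (AddMonoidHom.compLeft (Int.castAddHom ℝ) (Fin d)).range

/-- The lattice `Λ(M) = M⁻¹ ℤ^d = {y ∈ ℝ^d : M y ∈ ℤ^d}` of a regular integer matrix. -/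
abbrev lat {d : ℕ} (M : Matrix (Fin d) (Fin d) ℤ) : AddSubgroup (Fin d → ℝ) :=
  (intLat d).comap (Matrix.mulVecLin (M.map (Int.cast : ℤ → ℝ))).toAddMonoidHom

/-- The pattern `P(M) = Λ(M)/ℤ^d`, realised as the image of `Λ(M)` in `ℝ^d/ℤ^d`. -/
abbrev pat {d : ℕ} (M : Matrix (Fin d) (Fin d) ℤ) :
    AddSubgroup ((Fin d → ℝ) ⧸ intLat d) :=
  (lat M).map (QuotientAddGroup.mk' (intLat d))

/-- The generating group `G(M) = ℤ^d / M ℤ^d`. -/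
abbrev gQuot {d : ℕ} (M : Matrix (Fin d) (Fin d) ℤ) : Type :=
  (Fin d → ℤ) ⧸ (Matrix.mulVecLin M).range.toAddSubgroup

/-!
For `a ∈ ℤ^d` the map `g ↦ exp(-2πi aᵀ M⁻¹ g)` is an additive character of `ℤ^d` that is
trivial on `Mℤ^d`, hence a character of `G(M)`; it is the trivial character exactly when
`a ∈ Mᵀℤ^d`. The inner product of rows `h` and `h'` of `F(M)` is `m⁻¹` times the sum over
`G(M)` of the character attached to `h - h'`, which is `m` or `0` according as `h` and `h'`
represent the same class of `G(Mᵀ)` or not.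
-/

open Matrix Complex

namespace AddChar

section Quotient

variable {G R : Type*} [AddCommGroup G] [CommMonoid R]

def liftQuotient (H : AddSubgroup G) (ψ : AddChar G R) (hψ : ∀ h ∈ H, ψ h = 1) :
    AddChar (G ⧸ H) R :=
  toAddMonoidHomEquiv.symm <|
    QuotientAddGroup.lift H ψ.toAddMonoidHom fun h hh => by simp [hψ h hh]

@[simp]
lemma liftQuotient_mk (H : AddSubgroup G) (ψ : AddChar G R) (hψ : ∀ h ∈ H, ψ h = 1) (x : G) :
    liftQuotient H ψ hψ x = ψ x := rfl

end Quotient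

lemma sum_reps_eq_ite {G R ι : Type*} [AddCommGroup G] [CommRing R] [IsDomain R] [Fintype ι]
    {H : AddSubgroup G} {ψ : AddChar G R} (hψ : ∀ h ∈ H, ψ h = 1) {rep : ι → G}
    (hrep : Function.Bijective fun i => (rep i : G ⧸ H)) [Decidable (ψ = 0)] :
    ∑ i, ψ (rep i) = if ψ = 0 then (Fintype.card ι : R) else 0 := by
  let _ : Fintype (G ⧸ H) := Fintype.ofBijective _ hrep
  have hzero : liftQuotient H ψ hψ = 0 ↔ ψ = 0 := by
    simp only [eq_zero_iff, QuotientAddGroup.mk_surjective.forall, liftQuotient_mk]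
  rw [Fintype.sum_bijective _ hrep (fun i => ψ (rep i)) (liftQuotient H ψ hψ) fun i => rfl,
    sum_eq_ite, Fintype.card_of_bijective hrep]
  simp only [hzero]

end AddChar

lemma RingHom.map_matrix_inv {n K L : Type*} [Fintype n] [DecidableEq n] [Field K] [Field L]
    (f : K →+* L) (A : Matrix n n K) : A⁻¹.map f = (A.map f)⁻¹ := by
  have hdet : (A.map f).det = f A.det := (f.map_det A).symm
  have hadj : (A.map f).adjugate = A.adjugate.map f := (f.map_adjugate A).symm
  rw [Matrix.inv_def, Matrix.inv_def, Ring.inverse_eq_inv', Ring.inverse_eq_inv', hdet, hadj,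
    ← map_inv₀]
  ext i j
  simp

lemma Complex.exp_neg_two_pi_I_mul_eq_one_iff {z : ℂ} :
    exp (-2 * Real.pi * I * z) = 1 ↔ ∃ k : ℤ, z = k := by
  rw [exp_eq_one_iff]
  refine ⟨fun ⟨k, hk⟩ => ⟨-k, mul_left_cancel₀ two_pi_I_ne_zero ?_⟩, fun ⟨k, hk⟩ => ⟨-k, ?_⟩⟩
  · push_cast
    linear_combination -hk
  · rw [hk]
    push_cast
    ring

section IntCast

variable {m n R : Type*} [Fintype n] [Ring R]

lemma Int.cast_dotProduct (v w : n → ℤ) :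
    ((v ⬝ᵥ w : ℤ) : R) = (fun i => (v i : R)) ⬝ᵥ (fun i => (w i : R)) := by
  simp [dotProduct]

lemma Int.cast_mulVec (A : Matrix m n ℤ) (v : n → ℤ) :
    (fun i => ((A *ᵥ v) i : R)) = A.map Int.cast *ᵥ (fun i => (v i : R)) := by
  ext i
  simp [mulVec, dotProduct]

lemma Matrix.isUnit_det_map_intCast {K : Type*} [Field K] [CharZero K] [DecidableEq n]
    {M : Matrix n n ℤ} (hM : M.det ≠ 0) : IsUnit (M.map (Int.cast : ℤ → K)).det := by
  have hdet : (M.map (Int.cast : ℤ → K)).det = M.det := ((Int.castRingHom K).map_det M).symm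
  simpa [hdet] using hM

end IntCast

namespace Matrix

variable {n : Type*} [Fintype n] [DecidableEq n] (M : Matrix n n ℤ)

def invPairing (a g : n → ℤ) : ℂ :=
  (fun i => (a i : ℂ)) ⬝ᵥ (M.map (Int.cast : ℤ → ℂ))⁻¹ *ᵥ (fun i => (g i : ℂ))

lemma invPairing_add_left (a b g : n → ℤ) :
    invPairing M (a + b) g = invPairing M a g + invPairing M b g := by
  simp only [invPairing, Pi.add_apply, Int.cast_add, ← add_dotProduct]
  rfl

lemma invPairing_add_right (a g h : n → ℤ) :
    invPairing M a (g + h) = invPairing M a g + invPairing M a h := by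
  simp only [invPairing, Pi.add_apply, Int.cast_add, ← dotProduct_add, ← mulVec_add]
  rfl

lemma invPairing_neg_left (a g : n → ℤ) : invPairing M (-a) g = -invPairing M a g := by
  simp only [invPairing, Pi.neg_apply, Int.cast_neg, ← neg_dotProduct]
  rfl

lemma invPairing_zero_right (a : n → ℤ) : invPairing M a 0 = 0 := by
  simpa using invPairing_add_right M a 0 0

lemma star_invPairing (a g : n → ℤ) : star (invPairing M a g) = invPairing M a g := by
  have hinv : (M.map (Int.cast : ℤ → ℂ))⁻¹.map (starRingEnd ℂ) = (M.map Int.cast)⁻¹ := by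
    rw [RingHom.map_matrix_inv]
    congr 1
    ext i j
    simp
  rw [invPairing, ← starRingEnd_apply, RingHom.map_dotProduct]
  congr 1
  · ext i
    simp
  · ext i
    rw [Function.comp_apply, RingHom.map_mulVec, hinv]
    simp [Function.comp_def]

variable {M}

lemma invPairing_mulVec_right (hM : M.det ≠ 0) (a v : n → ℤ) :
    invPairing M a (M *ᵥ v) = ((a ⬝ᵥ v : ℤ) : ℂ) := by
  rw [invPairing, Int.cast_mulVec, mulVec_mulVec, nonsing_inv_mul _ (isUnit_det_map_intCast hM),
    one_mulVec, Int.cast_dotProduct]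

lemma invPairing_transpose_mulVec_left (hM : M.det ≠ 0) (b g : n → ℤ) :
    invPairing M (Mᵀ *ᵥ b) g = ((b ⬝ᵥ g : ℤ) : ℂ) := by
  rw [invPairing, Int.cast_mulVec, transpose_map, mulVec_transpose, ← dotProduct_mulVec,
    mulVec_mulVec, mul_nonsing_inv _ (isUnit_det_map_intCast hM), one_mulVec,
    Int.cast_dotProduct]

lemma invPairing_single_right (a : n → ℤ) (j : n) :
    invPairing M a (Pi.single j 1) = ((fun i => (a i : ℂ)) ᵥ* (M.map Int.cast)⁻¹) j := by
  have hsingle : (fun i => ((Pi.single j 1 : n → ℤ) i : ℂ)) = Pi.single j 1 := by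
    ext i
    by_cases h : i = j <;> simp [h]
  rw [invPairing, dotProduct_mulVec, hsingle, dotProduct_single, mul_one]

variable (M) in
def fourierChar (a : n → ℤ) : AddChar (n → ℤ) ℂ where
  toFun g := exp ((-2 : ℂ) * Real.pi * I * invPairing M a g)
  map_zero_eq_one' := by simp [invPairing_zero_right]
  map_add_eq_mul' g h := by rw [invPairing_add_right, mul_add, exp_add]

lemma fourierChar_apply (a g : n → ℤ) :
    fourierChar M a g = exp ((-2 : ℂ) * Real.pi * I * invPairing M a g) := rfl

lemma fourierChar_mul_star (a b g : n → ℤ) :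
    fourierChar M a g * star (fourierChar M b g) = fourierChar M (a - b) g := by
  rw [fourierChar_apply, fourierChar_apply, fourierChar_apply, ← starRingEnd_apply,
    ← Complex.exp_conj, ← exp_add, sub_eq_add_neg, invPairing_add_left, invPairing_neg_left]
  congr 1
  simp only [map_mul, map_neg, map_ofNat, conj_ofReal, conj_I]
  rw [starRingEnd_apply, star_invPairing]
  ring

lemma fourierChar_eq_one_of_mem_range (hM : M.det ≠ 0) (a : n → ℤ) {g : n → ℤ}
    (hg : g ∈ LinearMap.range (mulVecLin M)) : fourierChar M a g = 1 := by
  obtain ⟨v, rfl⟩ := hg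
  rw [fourierChar_apply, exp_neg_two_pi_I_mul_eq_one_iff]
  exact ⟨_, invPairing_mulVec_right hM a v⟩

lemma fourierChar_eq_zero_iff (hM : M.det ≠ 0) (a : n → ℤ) :
    fourierChar M a = 0 ↔ a ∈ LinearMap.range (mulVecLin Mᵀ) := by
  simp only [AddChar.eq_zero_iff, fourierChar_apply, exp_neg_two_pi_I_mul_eq_one_iff,
    LinearMap.mem_range, mulVecLin_apply]
  constructor
  · intro h
    -- the values at the unit vectors are the coordinates of `aᵀ M⁻¹`, so these are integers
    choose b hb using fun j => h (Pi.single j 1)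
    have hrow : (fun j => (b j : ℂ)) = (fun i => (a i : ℂ)) ᵥ* (M.map Int.cast)⁻¹ :=
      funext fun j => (hb j).symm.trans (invPairing_single_right a j)
    have hcast : (fun i => (a i : ℂ)) = fun i => ((Mᵀ *ᵥ b) i : ℂ) := by
      rw [Int.cast_mulVec, transpose_map, mulVec_transpose, hrow, vecMul_vecMul,
        nonsing_inv_mul _ (isUnit_det_map_intCast hM), vecMul_one]
    exact ⟨b, funext fun i => by exact_mod_cast (congrFun hcast i).symm⟩
  · rintro ⟨b, rfl⟩ g
    exact ⟨_, invPairing_transpose_mulVec_left hM b g⟩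

section FourierMatrix

variable {ι : Type*} [Fintype ι]

variable (M) in
def fourierMatrix (hrep grep : ι → n → ℤ) : Matrix ι ι ℂ :=
  of fun k l => (Real.sqrt (Fintype.card ι) : ℂ)⁻¹ * fourierChar M (hrep k) (grep l)

lemma fourierMatrix_mul_star_apply (hrep grep : ι → n → ℤ) (k k' : ι) :
    (fourierMatrix M hrep grep * star (fourierMatrix M hrep grep)) k k' =
      (Fintype.card ι : ℂ)⁻¹ * ∑ l, fourierChar M (hrep k - hrep k') (grep l) := by
  have hscalar : (Real.sqrt (Fintype.card ι) : ℂ)⁻¹ * star (Real.sqrt (Fintype.card ι) : ℂ)⁻¹ =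
      (Fintype.card ι : ℂ)⁻¹ := by
    rw [← ofReal_inv, star_def, conj_ofReal, ← ofReal_mul, ← mul_inv,
      Real.mul_self_sqrt (Nat.cast_nonneg _), ofReal_inv, ofReal_natCast]
  rw [mul_apply, ← hscalar, Finset.mul_sum]
  refine Finset.sum_congr rfl fun l _ => ?_
  rw [← fourierChar_mul_star, star_apply, fourierMatrix, of_apply, of_apply, star_mul']
  ring

theorem fourierMatrix_mem_unitaryGroup [DecidableEq ι] (hM : M.det ≠ 0) {hrep grep : ι → n → ℤ}
    (hh : Function.Bijective fun k =>
      (hrep k : (n → ℤ) ⧸ (LinearMap.range (mulVecLin Mᵀ)).toAddSubgroup))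
    (hg : Function.Bijective fun l =>
      (grep l : (n → ℤ) ⧸ (LinearMap.range (mulVecLin M)).toAddSubgroup)) :
    fourierMatrix M hrep grep ∈ unitaryGroup ι ℂ := by
  classical
  refine mem_unitaryGroup_iff.mpr (ext fun k k' => ?_)
  have hsum := AddChar.sum_reps_eq_ite (hrep := hg)
    fun _ => fourierChar_eq_one_of_mem_range hM (hrep k - hrep k')
  have htrivial : fourierChar M (hrep k - hrep k') = 0 ↔ k = k' := by
    rw [fourierChar_eq_zero_iff hM, ← Submodule.mem_toAddSubgroup,
      ← QuotientAddGroup.eq_iff_sub_mem, hh.1.eq_iff]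
  have : Nonempty ι := ⟨k⟩
  simp only [fourierMatrix_mul_star_apply, hsum, htrivial, one_apply]
  split_ifs <;> simp

end FourierMatrix

end Matrix

/-- The Fourier matrix `F(M) = m^{-1/2}(exp(-2πi hᵀ M⁻¹ g))`, indexed by complete sets
of representatives of `G(Mᵀ) = ℤ^d/Mᵀℤ^d` and `G(M) = ℤ^d/Mℤ^d`, is unitary. -/
theorem fourier_matrix_unitary (d : ℕ) (M : Matrix (Fin d) (Fin d) ℤ) (hM : M.det ≠ 0)
    (hrep grep : Fin M.det.natAbs → (Fin d → ℤ))
    (hh : Function.Bijective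
      (fun k => (QuotientAddGroup.mk (hrep k) : gQuot M.transpose)))
    (hg : Function.Bijective
      (fun k => (QuotientAddGroup.mk (grep k) : gQuot M))) :
    (fun k l : Fin M.det.natAbs =>
        ((Real.sqrt M.det.natAbs : ℂ))⁻¹ *
          Complex.exp ((-2 : ℂ) * Real.pi * Complex.I *
            dotProduct (fun i => (hrep k i : ℂ))
              ((M.map (Int.cast : ℤ → ℂ))⁻¹.mulVec (fun i => (grep l i : ℂ))))
      : Matrix (Fin M.det.natAbs) (Fin M.det.natAbs) ℂ)
      ∈ Matrix.unitaryGroup (Fin M.det.natAbs) ℂ := by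
  have h := fourierMatrix_mem_unitaryGroup hM hh hg
  rw [fourierMatrix, Fintype.card_fin] at h
  exact h
end
end

section
/- Let M be a regular integer matrix with elementary divisors ε_1 | ⋯ | ε_d and bases {y_j} of P(M) and {h_j} of G(M^T) satisfying ⟨h_j, y_i⟩ ≡ δ_{ij}/ε_{d-d_M+i} mod 1. Order P(M) and G(M^T) lexicographically by the coefficient tuples λ, μ ∈ E_M = ∏_j {0,…,ε_{d-d_M+j}-1}. Then the Fourier matrix F(M) equals the Kronecker product F_{ε_{d-d_M+1}} ⊗ ⋯ ⊗ F_{ε_d} of one-dimensional Fourier matrices. -/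
noncomputable section

/-! Because `Q` and `R` are unimodular, `|det M| = ∏ ε_j`, so the normalisation splits into the
factors `ε_j^{-1/2}`. Expanding `⟨∑ μ_j h_j, ∑ λ_i y_i⟩` bilinearly, biorthogonality leaves
`∑ μ_j λ_j / ε_j` up to an integer, which `exp(-2πi ·)` does not see; the exponential of that sum
is the product of the one-dimensional entries. -/

open Finset Matrix

theorem natAbs_det_mul_diagonal_mul {n : Type*} [Fintype n] [DecidableEq n]
    (Q R : Matrix n n ℤ) (ε : n → ℕ) (hQ : Q.det.natAbs = 1) (hR : R.det.natAbs = 1) :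
    (Q * diagonal (fun j => (ε j : ℤ)) * R).det.natAbs = ∏ j, ε j := by
  rw [det_mul, det_mul, det_diagonal, ← Nat.cast_prod, Int.natAbs_mul, Int.natAbs_mul, hQ, hR,
    Int.natAbs_natCast, one_mul, mul_one]

theorem exists_int_dotProduct_sum_smul_eq {ι κ : Type*} [Fintype ι] [DecidableEq ι]
    [Fintype κ] (h : ι → κ → ℤ) (y : ι → κ → ℝ) (e : ι → ℝ)
    (hbio : ∀ i j, ∃ z : ℤ,
      (fun k => (h j k : ℝ)) ⬝ᵥ y i = (if i = j then (e i)⁻¹ else 0) + z)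
    (a b : ι → ℤ) :
    ∃ Z : ℤ, (fun k => ((∑ j, a j • h j) k : ℝ)) ⬝ᵥ ∑ i, (b i : ℝ) • y i
      = ∑ j, (a j : ℝ) * b j / e j + Z := by
  choose z hz using hbio
  refine ⟨∑ j, ∑ i, a j * b i * z i j, ?_⟩
  have hcast : (fun k => ((∑ j, a j • h j) k : ℝ))
      = ∑ j, (a j : ℝ) • fun k => (h j k : ℝ) := by
    ext k; simp [Finset.sum_apply]
  have hterm : ∀ j i, (a j : ℝ) * b i * ((fun k => (h j k : ℝ)) ⬝ᵥ y i)
      = (if i = j then (a j : ℝ) * b j / e j else 0) + ((a j * b i * z i j : ℤ) : ℝ) := by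
    intro j i
    rw [hz i j]
    split_ifs with hij
    · subst hij; push_cast; ring
    · push_cast; ring
  calc (fun k => ((∑ j, a j • h j) k : ℝ)) ⬝ᵥ ∑ i, (b i : ℝ) • y i
      = ∑ j, ∑ i, (a j : ℝ) * b i * ((fun k => (h j k : ℝ)) ⬝ᵥ y i) := by
        rw [hcast, sum_dotProduct]
        simp only [smul_dotProduct, dotProduct_sum, dotProduct_smul,
          smul_eq_mul, mul_assoc, mul_left_comm ((b _ : ℤ) : ℝ)]
    _ = ∑ j, (a j : ℝ) * b j / e j + ((∑ j, ∑ i, a j * b i * z i j : ℤ) : ℝ) := by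
        simp only [hterm, sum_add_distrib, sum_ite_eq', mem_univ, if_true]
        push_cast
        rfl

theorem Complex.exp_neg_two_pi_I_mul_add_intCast (x : ℂ) (Z : ℤ) :
    exp (-2 * Real.pi * I * (x + Z)) = exp (-2 * Real.pi * I * x) := by
  rw [mul_add, exp_add, show -2 * (Real.pi : ℂ) * I * Z = (-Z : ℤ) * (2 * Real.pi * I) by
    push_cast; ring, exp_int_mul_two_pi_mul_I, mul_one]

theorem fourier_matrix_kronecker_general (d : ℕ) (M Q R : Matrix (Fin d) (Fin d) ℤ)
    (ε : Fin d → ℕ)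
    (hQ : Q.det.natAbs = 1) (hR : R.det.natAbs = 1)
    (hSNF : M = Q * Matrix.diagonal (fun j => (ε j : ℤ)) * R)
    (y : Fin d → (Fin d → ℝ)) (h : Fin d → (Fin d → ℤ))
    (hbio : ∀ i j : Fin d, ∃ z : ℤ,
      dotProduct (fun k => (h j k : ℝ)) (y i)
        = (if i = j then (ε i : ℝ)⁻¹ else 0) + z) :
    ∀ mu lam : (j : Fin d) → Fin (ε j),
      ((Real.sqrt M.det.natAbs : ℂ))⁻¹ *
        Complex.exp ((-2 : ℂ) * Real.pi * Complex.I *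
          ((dotProduct
              (fun k => (((∑ j : Fin d, ((mu j : ℕ) : ℤ) • h j)) k : ℝ))
              (∑ j : Fin d, ((lam j : ℕ) : ℝ) • y j) : ℝ) : ℂ))
      = ∏ j : Fin d,
          ((Real.sqrt (ε j) : ℂ))⁻¹ *
            Complex.exp ((-2 : ℂ) * Real.pi * Complex.I *
              ((((mu j : ℕ) : ℝ) * ((lam j : ℕ) : ℝ) / (ε j : ℝ) : ℝ) : ℂ)) := by
  intro mu lam
  obtain ⟨Z, hZ⟩ := exists_int_dotProduct_sum_smul_eq h y (fun j => (ε j : ℝ)) hbio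
    (fun j => (mu j : ℤ)) (fun j => (lam j : ℤ))
  simp only [Int.cast_natCast] at hZ
  rw [hZ, Complex.ofReal_add, Complex.ofReal_intCast, Complex.exp_neg_two_pi_I_mul_add_intCast,
    Complex.ofReal_sum, mul_sum, Complex.exp_sum, prod_mul_distrib, hSNF,
    natAbs_det_mul_diagonal_mul Q R ε hQ hR, Nat.cast_prod,
    Real.sqrt_prod _ fun j _ => Nat.cast_nonneg (ε j), Complex.ofReal_prod, prod_inv_distrib]

/-- Kronecker factorization of the Fourier matrix: for biorthogonal bases `{y_j}` of
`P(M)` and `{h_j}` of `G(Mᵀ)` with `⟨h_j, y_i⟩ ≡ δ_{ij}/ε_i (mod 1)`, ordered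
lexicographically by the coefficient tuples, the entry of `F(M)` at `(μ, λ)` equals
the corresponding entry `∏_j F_{ε_j}(μ_j, λ_j)` of the Kronecker product
`F_{ε_1} ⊗ ⋯ ⊗ F_{ε_d}` (factors with `ε_j = 1` being trivial). -/
theorem fourier_matrix_kronecker (d : ℕ) (M Q R : Matrix (Fin d) (Fin d) ℤ)
    (ε : Fin d → ℕ) (hM : M.det ≠ 0)
    (hQ : Q.det.natAbs = 1) (hR : R.det.natAbs = 1)
    (hpos : ∀ j, 0 < ε j)
    (hdvd : ∀ (j : Fin d) (h : (j : ℕ) + 1 < d), ε j ∣ ε ⟨(j : ℕ) + 1, h⟩)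
    (hSNF : M = Q * Matrix.diagonal (fun j => (ε j : ℤ)) * R)
    (y : Fin d → (Fin d → ℝ)) (h : Fin d → (Fin d → ℤ))
    (hybasis : ∀ p ∈ pat M, ∃! lam : (j : Fin d) → Fin (ε j),
      p = QuotientAddGroup.mk (∑ j : Fin d, ((lam j : ℕ) : ℝ) • y j))
    (hhbasis : ∀ q : gQuot M.transpose, ∃! mu : (j : Fin d) → Fin (ε j),
      q = QuotientAddGroup.mk (∑ j : Fin d, ((mu j : ℕ) : ℤ) • h j))
    (hbio : ∀ i j : Fin d, ∃ z : ℤ,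
      dotProduct (fun k => (h j k : ℝ)) (y i)
        = (if i = j then (ε i : ℝ)⁻¹ else 0) + z) :
    ∀ mu lam : (j : Fin d) → Fin (ε j),
      ((Real.sqrt M.det.natAbs : ℂ))⁻¹ *
        Complex.exp ((-2 : ℂ) * Real.pi * Complex.I *
          ((dotProduct
              (fun k => (((∑ j : Fin d, ((mu j : ℕ) : ℤ) • h j)) k : ℝ))
              (∑ j : Fin d, ((lam j : ℕ) : ℝ) • y j) : ℝ) : ℂ))
      = ∏ j : Fin d,
          ((Real.sqrt (ε j) : ℂ))⁻¹ *
            Complex.exp ((-2 : ℂ) * Real.pi * Complex.I *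
              ((((mu j : ℕ) : ℝ) * ((lam j : ℕ) : ℝ) / (ε j : ℝ) : ℝ) : ℂ)) :=
  fourier_matrix_kronecker_general d M Q R ε hQ hR hSNF y h hbio
end
end

section
/- Let M = JN with J, N ∈ ℤ^{d×d} regular, and let {x_1,…,x_{d_M}} and {y_1,…,y_{d_N}} be bases of P(M) and P(N) respectively. Then there exists a matrix P ∈ ℕ_0^{d_M×d_N} such that whenever w ∈ P(N) has coefficient vector μ with respect to {y_k} and coefficient vector λ with respect to {x_l} (as an element of P(M) ⊇ P(N)), one has λ ≡ Pμ componentwise modulo the respective cycle lengths. -/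
/-!
Every basis vector `y_k` of `P(N)` lies in `P(M)`, so it has coefficients `L_k` with respect to
`{x_l}`. By linearity `Σ μ_k y_k = Σ_l (Σ_k L_{kl} μ_k) x_l`, and since `ε_l x_l = 0` the
coefficients may be reduced modulo the cycle lengths `ε_l`. Uniqueness of the representation in
`P(M)` then forces `λ_l ≡ Σ_k L_{kl} μ_k`, i.e. `P = Lᵀ`.
-/

noncomputable section

open Finset

section CycleBasis

variable {G ι κ : Type*} [AddCommGroup G] [Fintype ι] [Fintype κ]

def IsCycleBasis (H : AddSubgroup G) (ε : ι → ℕ) (X : ι → G) : Prop :=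
  ∀ p ∈ H, ∃! lam : (l : ι) → Fin (ε l), p = ∑ l, (lam l : ℕ) • X l

theorem sum_nsmul_mod_eq {ε : ι → ℕ} {X : ι → G} (hX : ∀ l, ε l • X l = 0) (c : ι → ℕ) :
    ∑ l, (c l % ε l) • X l = ∑ l, c l • X l :=
  sum_congr rfl fun l _ => (nsmul_eq_mod_nsmul (c l) (hX l)).symm

theorem sum_nsmul_sum_nsmul (X : ι → G) (L : κ → ι → ℕ) (μ : κ → ℕ) :
    ∑ k, μ k • ∑ l, L k l • X l = ∑ l, (∑ k, L k l * μ k) • X l := by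
  simp only [smul_sum, smul_smul, sum_smul]
  rw [sum_comm]
  simp only [mul_comm]

theorem IsCycleBasis.modEq_of_sum_nsmul_eq {H : AddSubgroup G} {ε : ι → ℕ} {X : ι → G}
    (hbasis : IsCycleBasis H ε X) (hX : ∀ l, ε l • X l = 0) {lam : (l : ι) → Fin (ε l)}
    (hmem : ∑ l, (lam l : ℕ) • X l ∈ H) {c : ι → ℕ}
    (h : ∑ l, (lam l : ℕ) • X l = ∑ l, c l • X l) (l : ι) :
    (lam l : ℕ) ≡ c l [MOD ε l] := by
  let red : (l : ι) → Fin (ε l) := fun l => ⟨c l % ε l, Nat.mod_lt _ (lam l).pos⟩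
  have hred : ∑ l, (lam l : ℕ) • X l = ∑ l, (red l : ℕ) • X l := by
    rw [h, sum_nsmul_mod_eq hX]
  obtain ⟨u, -, huniq⟩ := hbasis _ hmem
  have hlam : lam = red := (huniq lam rfl).trans (huniq red hred).symm
  rw [hlam]
  exact Nat.mod_modEq _ _

theorem IsCycleBasis.exists_matrix_modEq {H : AddSubgroup G} {ε : ι → ℕ} {X : ι → G}
    (hbasis : IsCycleBasis H ε X) (hX : ∀ l, ε l • X l = 0) {Y : κ → G} (hY : ∀ k, Y k ∈ H) :
    ∃ P : Matrix ι κ ℕ, ∀ (μ : κ → ℕ) (lam : (l : ι) → Fin (ε l)),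
      ∑ k, μ k • Y k = ∑ l, (lam l : ℕ) • X l →
        ∀ l, (lam l : ℕ) ≡ ∑ k, P l k * μ k [MOD ε l] := by
  choose L hL using fun k => (hbasis _ (hY k)).exists
  refine ⟨fun l k => L k l, fun μ lam h => hbasis.modEq_of_sum_nsmul_eq hX ?_ ?_⟩
  · exact h ▸ sum_mem fun k _ => AddSubgroup.nsmul_mem _ (hY k) _
  · rw [← h, ← sum_nsmul_sum_nsmul]
    exact sum_congr rfl fun k _ => by rw [hL k]

end CycleBasis

theorem QuotientAddGroup.mk_sum_natCast_smul {E ι : Type*} [AddCommGroup E] [Module ℝ E]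
    (S : AddSubgroup E) (s : Finset ι) (c : ι → ℕ) (v : ι → E) :
    (QuotientAddGroup.mk (∑ j ∈ s, (c j : ℝ) • v j) : E ⧸ S) = ∑ j ∈ s, c j • (v j : E ⧸ S) := by
  simp only [QuotientAddGroup.mk_sum, Nat.cast_smul_eq_nsmul, QuotientAddGroup.mk_nsmul]

theorem lat_le_lat_mul {d : ℕ} (J N : Matrix (Fin d) (Fin d) ℤ) : lat N ≤ lat (J * N) := by
  rintro v ⟨a, ha⟩
  refine ⟨J.mulVec a, funext fun i => ?_⟩
  have hv := congrFun ha
  simp only [AddMonoidHom.compLeft_apply, Function.comp_apply, Int.coe_castAddHom,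
    LinearMap.toAddMonoidHom_coe, Matrix.mulVecLin_apply] at hv ⊢
  have hmul : (J * N).map (Int.cast : ℤ → ℝ) = J.map Int.cast * N.map Int.cast :=
    Matrix.map_mul (f := Int.castRingHom ℝ)
  rw [hmul, ← Matrix.mulVec_mulVec, ← funext hv]
  simp [Matrix.mulVec, dotProduct]

theorem pat_le_pat_mul {d : ℕ} (J N : Matrix (Fin d) (Fin d) ℤ) : pat N ≤ pat (J * N) :=
  AddSubgroup.map_mono (lat_le_lat_mul J N)

theorem projection_matrix_exists_general (d : ℕ) (J N : Matrix (Fin d) (Fin d) ℤ)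
    (epsM epsN : Fin d → ℕ)
    (x y : Fin d → (Fin d → ℝ))
    (hymem : ∀ j, (QuotientAddGroup.mk (y j) : (Fin d → ℝ) ⧸ intLat d) ∈ pat N)
    (hordx : ∀ j, ((epsM j : ℝ) • x j) ∈ intLat d)
    (hxbasis : ∀ p ∈ pat (J * N), ∃! lam : (j : Fin d) → Fin (epsM j),
      p = QuotientAddGroup.mk (∑ j : Fin d, ((lam j : ℕ) : ℝ) • x j)) :
    ∃ P : Matrix (Fin d) (Fin d) ℕ,
      ∀ (mu : (j : Fin d) → Fin (epsN j)) (lam : (j : Fin d) → Fin (epsM j)),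
        (QuotientAddGroup.mk (∑ j : Fin d, ((mu j : ℕ) : ℝ) • y j) :
            (Fin d → ℝ) ⧸ intLat d)
          = QuotientAddGroup.mk (∑ j : Fin d, ((lam j : ℕ) : ℝ) • x j) →
        ∀ l : Fin d, (lam l : ℕ) ≡ ∑ k : Fin d, P l k * (mu k : ℕ) [MOD epsM l] := by
  have hbasis : IsCycleBasis (pat (J * N)) epsM fun l => (x l : (Fin d → ℝ) ⧸ intLat d) :=
    fun p hp => by simpa only [QuotientAddGroup.mk_sum_natCast_smul] using hxbasis p hp
  have hord : ∀ l, epsM l • (x l : (Fin d → ℝ) ⧸ intLat d) = 0 := fun l => by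
    rw [← QuotientAddGroup.mk_nsmul, ← Nat.cast_smul_eq_nsmul ℝ,
      QuotientAddGroup.eq_zero_iff]
    exact hordx l
  obtain ⟨P, hP⟩ := hbasis.exists_matrix_modEq hord fun k => pat_le_pat_mul J N (hymem k)
  refine ⟨P, fun mu lam h => hP (fun k => mu k) lam ?_⟩
  simpa only [QuotientAddGroup.mk_sum_natCast_smul] using h

/-- Projection lemma: for `M = J N` with bases `{x_l}` of `P(M)` and `{y_k}` of
`P(N) ⊆ P(M)`, there is a matrix `P ∈ ℕ₀^{d×d}` such that whenever `w ∈ P(N)` has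
coefficients `μ` w.r.t. `{y_k}` and coefficients `λ` w.r.t. `{x_l}`, one has
`λ ≡ P μ` componentwise modulo the respective cycle lengths. -/
theorem projection_matrix_exists (d : ℕ) (J N : Matrix (Fin d) (Fin d) ℤ)
    (hJ : J.det ≠ 0) (hN : N.det ≠ 0)
    (epsM epsN : Fin d → ℕ) (hposM : ∀ j, 0 < epsM j) (hposN : ∀ j, 0 < epsN j)
    (x y : Fin d → (Fin d → ℝ))
    (hxmem : ∀ j, (QuotientAddGroup.mk (x j) : (Fin d → ℝ) ⧸ intLat d) ∈ pat (J * N))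
    (hymem : ∀ j, (QuotientAddGroup.mk (y j) : (Fin d → ℝ) ⧸ intLat d) ∈ pat N)
    (hordx : ∀ j, ((epsM j : ℝ) • x j) ∈ intLat d)
    (hordy : ∀ j, ((epsN j : ℝ) • y j) ∈ intLat d)
    (hxbasis : ∀ p ∈ pat (J * N), ∃! lam : (j : Fin d) → Fin (epsM j),
      p = QuotientAddGroup.mk (∑ j : Fin d, ((lam j : ℕ) : ℝ) • x j))
    (hybasis : ∀ p ∈ pat N, ∃! mu : (j : Fin d) → Fin (epsN j),
      p = QuotientAddGroup.mk (∑ j : Fin d, ((mu j : ℕ) : ℝ) • y j)) :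
    ∃ P : Matrix (Fin d) (Fin d) ℕ,
      ∀ (mu : (j : Fin d) → Fin (epsN j)) (lam : (j : Fin d) → Fin (epsM j)),
        (QuotientAddGroup.mk (∑ j : Fin d, ((mu j : ℕ) : ℝ) • y j) :
            (Fin d → ℝ) ⧸ intLat d)
          = QuotientAddGroup.mk (∑ j : Fin d, ((lam j : ℕ) : ℝ) • x j) →
        ∀ l : Fin d, (lam l : ℕ) ≡ ∑ k : Fin d, P l k * (mu k : ℕ) [MOD epsM l] :=
  projection_matrix_exists_general d J N epsM epsN x y hymem hordx hxbasis
end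
end
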